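/- In a spark complex, the kernel of the curvature map δ₁ on degree-k spark classes is naturally isomorphic to H^k(F*/I*), the k-th cohomology of the quotient complex F*/I*. -/

import Mathlib

/-! Since `E ∩ I = 0` in degree `k + 2`, the `E`-component `φ` of `da = φ - r` is determined by
the spark `a`, and it vanishes on trivial sparks `db + s` because `d(db + s) = ds ∈ I`. A spark has
curvature zero exactly when `da ∈ I`, i.e. when it is a cocycle of `F/I`. Since `H(F/I)` and the
spark classes are quotients by the same group `dF + I`, the inclusion of `F/I`-cocycles into sparks
induces an isomorphism of `H(F/I)` onto the kernel of `δ₁`. -/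

section SparkMachinery

section SparkMachinery

variable (F : ℤ → Type) [∀ k, AddCommGroup (F k)]
  (d : ∀ k : ℤ, F k →+ F (k + 1))
  (E I : ∀ k : ℤ, AddSubgroup (F k))

/-- The group of homological sparks of degree `k+1`:
elements `a ∈ F^{k+1}` with `da = φ - r`, `φ ∈ E^{k+2}`, `r ∈ I^{k+2}`. -/
def sparkSub (k : ℤ) : AddSubgroup (F (k + 1)) where
  carrier := {a | ∃ φ ∈ E (k + 1 + 1), ∃ r ∈ I (k + 1 + 1), d (k + 1) a = φ - r}
  zero_mem' := ⟨0, (E (k + 1 + 1)).zero_mem, 0, (I (k + 1 + 1)).zero_mem, by simp⟩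
  add_mem' := by
    rintro a b ⟨φ, hφ, r, hr, ha⟩ ⟨ψ, hψ, t, ht, hb⟩
    exact ⟨φ + ψ, (E _).add_mem hφ hψ, r + t, (I _).add_mem hr ht, by
      simp only [map_add, ha, hb]; abel⟩
  neg_mem' := by
    rintro a ⟨φ, hφ, r, hr, ha⟩
    exact ⟨-φ, (E _).neg_mem hφ, -r, (I _).neg_mem hr, by
      simp only [map_neg, ha]; abel⟩

/-- The subgroup of trivial sparks `db + s`, `b ∈ F^k`, `s ∈ I^{k+1}`. -/
def trivSub (k : ℤ) : AddSubgroup (F (k + 1)) where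
  carrier := {a | ∃ b : F k, ∃ s ∈ I (k + 1), a = d k b + s}
  zero_mem' := ⟨0, 0, (I (k + 1)).zero_mem, by simp⟩
  add_mem' := by
    rintro a b ⟨c, s, hs, ha⟩ ⟨c', s', hs', hb⟩
    exact ⟨c + c', s + s', (I _).add_mem hs hs', by
      simp only [ha, hb, map_add]; abel⟩
  neg_mem' := by
    rintro a ⟨c, s, hs, ha⟩
    exact ⟨-c, -s, (I _).neg_mem hs, by simp only [ha, map_neg]; abel⟩

/-- The group of spark classes of degree `k+1`: sparks modulo trivial sparks. -/
def SparkClasses (k : ℤ) :=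
  sparkSub F d E I k ⧸ (trivSub F d I k).addSubgroupOf (sparkSub F d E I k)

instance (k : ℤ) : AddCommGroup (SparkClasses F d E I k) :=
  QuotientAddGroup.Quotient.addCommGroup _




/-- The cocycles of the quotient complex `F/I` in degree `k+1`:
elements `a ∈ F^{k+1}` with `da ∈ I^{k+2}`. -/
def flatSub (k : ℤ) : AddSubgroup (F (k + 1)) where
  carrier := {a | d (k + 1) a ∈ I (k + 1 + 1)}
  zero_mem' := by simp [(I (k + 1 + 1)).zero_mem]
  add_mem' := by
    intro a b ha hb
    simp only [Set.mem_setOf_eq, map_add] at *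
    exact (I _).add_mem ha hb
  neg_mem' := by
    intro a ha
    simp only [Set.mem_setOf_eq, map_neg] at *
    exact (I _).neg_mem ha

/-- `H^{k+1}(F^*/I^*)`: the cohomology of the quotient complex `F/I`,
i.e. `{a : da ∈ I}` modulo `dF^k + I^{k+1}`. -/
def HFI (k : ℤ) :=
  flatSub F d I k ⧸ (trivSub F d I k).addSubgroupOf (flatSub F d I k)

instance (k : ℤ) : AddCommGroup (HFI F d I k) :=
  QuotientAddGroup.Quotient.addCommGroup _

end SparkMachinery

theorem AddSubgroup.eq_of_sub_eq_sub_of_disjoint {G : Type*} [AddCommGroup G]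
    {A B : AddSubgroup G} (hAB : Disjoint A B) {a a' b b' : G} (ha : a ∈ A) (ha' : a' ∈ A)
    (hb : b ∈ B) (hb' : b' ∈ B) (h : a - b = a' - b') : a = a' := by
  refine sub_eq_zero.mp (AddSubgroup.disjoint_def.mp hAB (A.sub_mem ha ha') ?_)
  rw [sub_eq_sub_iff_sub_eq_sub.mp h]
  exact B.sub_mem hb hb'

section Curvature

variable {F : ℤ → Type} [∀ k, AddCommGroup (F k)] {d : ∀ k : ℤ, F k →+ F (k + 1)}
  {E I : ∀ k : ℤ, AddSubgroup (F k)} {k : ℤ}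

theorem flatSub_le_sparkSub : flatSub F d I k ≤ sparkSub F d E I k :=
  fun a ha => ⟨0, zero_mem _, -d (k + 1) a, neg_mem ha, by rw [zero_sub, neg_neg]⟩

variable (d) in
/-- The curvature `φ` of a spark `a`, `da = φ - r`: well defined since `E ∩ I = 0`. -/
noncomputable def sparkCurvature (hEI : Disjoint (E (k + 1 + 1)) (I (k + 1 + 1))) :
    sparkSub F d E I k →+ E (k + 1 + 1) :=
  AddMonoidHom.mk' (fun a => ⟨a.2.choose, a.2.choose_spec.1⟩) fun a b => by
    obtain ⟨r, hr, ha⟩ := a.2.choose_spec.2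
    obtain ⟨t, ht, hb⟩ := b.2.choose_spec.2
    obtain ⟨s, hs, hab⟩ := (a + b).2.choose_spec.2
    ext
    refine AddSubgroup.eq_of_sub_eq_sub_of_disjoint hEI (a + b).2.choose_spec.1
      (add_mem a.2.choose_spec.1 b.2.choose_spec.1) hs (add_mem hr ht) ?_
    rw [← hab, AddSubgroup.coe_add, map_add]
    exact (congrArg₂ (· + ·) ha hb).trans (by simp only [AddSubgroup.coe_add]; abel)

theorem sparkCurvature_eq (hEI : Disjoint (E (k + 1 + 1)) (I (k + 1 + 1)))
    (a : sparkSub F d E I k) {φ r : F (k + 1 + 1)} (hφ : φ ∈ E (k + 1 + 1))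
    (hr : r ∈ I (k + 1 + 1)) (h : d (k + 1) a = φ - r) :
    sparkCurvature d hEI a = ⟨φ, hφ⟩ := by
  obtain ⟨r', hr', ha⟩ := a.2.choose_spec.2
  exact Subtype.ext <| AddSubgroup.eq_of_sub_eq_sub_of_disjoint hEI a.2.choose_spec.1 hφ hr' hr
    (ha.symm.trans h)

theorem sparkCurvature_eq_zero_iff (hEI : Disjoint (E (k + 1 + 1)) (I (k + 1 + 1)))
    (a : sparkSub F d E I k) : sparkCurvature d hEI a = 0 ↔ (a : F (k + 1)) ∈ flatSub F d I k := by
  obtain ⟨φ, hφ, r, hr, ha⟩ := a.2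
  constructor
  · intro h0
    have hφ0 : φ = 0 := congrArg Subtype.val ((sparkCurvature_eq hEI a hφ hr ha).symm.trans h0)
    show d (k + 1) a ∈ I (k + 1 + 1)
    rw [ha, hφ0, zero_sub]
    exact neg_mem hr
  · intro hflat
    exact sparkCurvature_eq hEI a (zero_mem _) (neg_mem hflat) (by rw [zero_sub, neg_neg])

theorem trivSub_le_flatSub (hdd : ∀ (k : ℤ) (x : F k), d (k + 1) (d k x) = 0)
    (hdI : ∀ (k : ℤ) (x : F k), x ∈ I k → d k x ∈ I (k + 1)) :
    trivSub F d I k ≤ flatSub F d I k := by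
  rintro _ ⟨b, s, hs, rfl⟩
  show d (k + 1) (d k b + s) ∈ I (k + 1 + 1)
  rw [map_add, hdd, zero_add]
  exact hdI _ s hs

variable (d) in
/-- The curvature map `δ₁` on spark classes. -/
noncomputable def sparkClassCurvature (hdd : ∀ (k : ℤ) (x : F k), d (k + 1) (d k x) = 0)
    (hdI : ∀ (k : ℤ) (x : F k), x ∈ I k → d k x ∈ I (k + 1))
    (hEI : Disjoint (E (k + 1 + 1)) (I (k + 1 + 1))) :
    SparkClasses F d E I k →+ E (k + 1 + 1) :=
  QuotientAddGroup.lift _ (sparkCurvature d hEI) fun a ha =>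
    (sparkCurvature_eq_zero_iff hEI a).mpr (trivSub_le_flatSub hdd hdI ha)

variable (F d E I k) in
def flatClassToSparkClass : HFI F d I k →+ SparkClasses F d E I k :=
  QuotientAddGroup.map _ _ (AddSubgroup.inclusion flatSub_le_sparkSub) fun _ ha => ha

theorem flatClassToSparkClass_injective :
    Function.Injective (flatClassToSparkClass F d E I k) := by
  rw [injective_iff_map_eq_zero]
  intro x hx
  obtain ⟨a, rfl⟩ := QuotientAddGroup.mk_surjective x
  exact (QuotientAddGroup.eq_zero_iff a).mpr
    ((QuotientAddGroup.eq_zero_iff (AddSubgroup.inclusion flatSub_le_sparkSub a)).mp hx)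

theorem range_flatClassToSparkClass (hdd : ∀ (k : ℤ) (x : F k), d (k + 1) (d k x) = 0)
    (hdI : ∀ (k : ℤ) (x : F k), x ∈ I k → d k x ∈ I (k + 1))
    (hEI : Disjoint (E (k + 1 + 1)) (I (k + 1 + 1))) :
    (flatClassToSparkClass F d E I k).range = (sparkClassCurvature d hdd hdI hEI).ker := by
  ext x
  constructor
  · rintro ⟨y, rfl⟩
    obtain ⟨a, rfl⟩ := QuotientAddGroup.mk_surjective y
    exact (sparkCurvature_eq_zero_iff hEI (AddSubgroup.inclusion flatSub_le_sparkSub a)).mpr a.2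
  · obtain ⟨a, rfl⟩ := QuotientAddGroup.mk_surjective x
    intro (ha : sparkCurvature d hEI a = 0)
    exact ⟨QuotientAddGroup.mk ⟨a, (sparkCurvature_eq_zero_iff hEI a).mp ha⟩, rfl⟩

end Curvature

theorem stmt_7_general
    (F : ℤ → Type) [∀ k, AddCommGroup (F k)]
    (d : ∀ k : ℤ, F k →+ F (k + 1))
    (hdd : ∀ (k : ℤ) (x : F k), d (k + 1) (d k x) = 0)
    (E I : ∀ k : ℤ, AddSubgroup (F k))
    (hdI : ∀ (k : ℤ) (x : F k), x ∈ I k → d k x ∈ I (k + 1))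
    -- Axiom (B): `Eʲ ∩ Iʲ = 0` for `j ≥ 1`
    (hB : ∀ j : ℤ, 1 ≤ j → ∀ x : F j, x ∈ E j → x ∈ I j → x = 0)
    (k : ℤ) (hk : -1 ≤ k) :
    ∃ δ₁ : SparkClasses F d E I k →+ E (k + 1 + 1),
      (∀ (a : F (k + 1)) (ha : a ∈ sparkSub F d E I k)
        (φ : F (k + 1 + 1)) (hφ : φ ∈ E (k + 1 + 1))
        (r : F (k + 1 + 1)) (_ : r ∈ I (k + 1 + 1)),
        d (k + 1) a = φ - r →
        δ₁ (QuotientAddGroup.mk ⟨a, ha⟩) = ⟨φ, hφ⟩) ∧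
      ∃ e : HFI F d I k ≃+ δ₁.ker,
        ∀ (a : F (k + 1)) (h1 : a ∈ flatSub F d I k)
          (h2 : a ∈ sparkSub F d E I k),
          ((e (QuotientAddGroup.mk ⟨a, h1⟩) : δ₁.ker) : SparkClasses F d E I k)
            = QuotientAddGroup.mk ⟨a, h2⟩ := by
  have hEI : Disjoint (E (k + 1 + 1)) (I (k + 1 + 1)) :=
    AddSubgroup.disjoint_def.mpr fun hE hI => hB _ (by omega) _ hE hI
  refine ⟨sparkClassCurvature d hdd hdI hEI,
    fun a ha φ hφ r hr h => sparkCurvature_eq hEI ⟨a, ha⟩ hφ hr h, ?_⟩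
  exact ⟨(AddMonoidHom.ofInjective flatClassToSparkClass_injective).trans
    (AddEquiv.addSubgroupCongr (range_flatClassToSparkClass hdd hdI hEI)), fun _ _ _ => rfl⟩

/-- In a spark complex, the kernel of the curvature map `δ₁`
on spark classes of degree `k+1` is naturally isomorphic to `H^{k+1}(F^*/I^*)`,
the cohomology of the quotient complex `F/I`. -/
theorem stmt_7
    (F : ℤ → Type) [∀ k, AddCommGroup (F k)]
    (d : ∀ k : ℤ, F k →+ F (k + 1))
    (hdd : ∀ (k : ℤ) (x : F k), d (k + 1) (d k x) = 0)
    (E I : ∀ k : ℤ, AddSubgroup (F k))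
    (hdE : ∀ (k : ℤ) (x : F k), x ∈ E k → d k x ∈ E (k + 1))
    (hdI : ∀ (k : ℤ) (x : F k), x ∈ I k → d k x ∈ I (k + 1))
    -- Axiom (A): the inclusion `E → F` induces an isomorphism on cohomology
    (hAinj : ∀ (j : ℤ) (e : F (j + 1)), e ∈ E (j + 1) → d (j + 1) e = 0 →
      (∃ y : F j, d j y = e) → ∃ y ∈ E j, d j y = e)
    (hAsurj : ∀ (j : ℤ) (x : F (j + 1)), d (j + 1) x = 0 →
      ∃ e ∈ E (j + 1), d (j + 1) e = 0 ∧ ∃ y : F j, x - e = d j y)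
    -- Axiom (B): `Eʲ ∩ Iʲ = 0` for `j ≥ 1`
    (hB : ∀ j : ℤ, 1 ≤ j → ∀ x : F j, x ∈ E j → x ∈ I j → x = 0)
    (k : ℤ) (hk : -1 ≤ k) :
    ∃ δ₁ : SparkClasses F d E I k →+ E (k + 1 + 1),
      (∀ (a : F (k + 1)) (ha : a ∈ sparkSub F d E I k)
        (φ : F (k + 1 + 1)) (hφ : φ ∈ E (k + 1 + 1))
        (r : F (k + 1 + 1)) (_ : r ∈ I (k + 1 + 1)),
        d (k + 1) a = φ - r →
        δ₁ (QuotientAddGroup.mk ⟨a, ha⟩) = ⟨φ, hφ⟩) ∧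
      ∃ e : HFI F d I k ≃+ δ₁.ker,
        ∀ (a : F (k + 1)) (h1 : a ∈ flatSub F d I k)
          (h2 : a ∈ sparkSub F d E I k),
          ((e (QuotientAddGroup.mk ⟨a, h1⟩) : δ₁.ker) : SparkClasses F d E I k)
            = QuotientAddGroup.mk ⟨a, h2⟩ :=
  stmt_7_general F d hdd E I hdI hB k hk
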